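/- Let d ≥ 1 and let w_1 ≥ w_2 ≥ 1 be integers, and let t_1, t_2 ≥ 0 be rationals. Let f ∈ ℂ[x_0,x_1,x_2] be a nonzero homogeneous polynomial of degree d, let l_1 = m_1 be a nonzero linear form in x_0, x_1 only (so the line l_1 = 0 passes through [0:0:1]), and let l_2 = m_2 + x_2 where m_2 is a linear form in x_0, x_1 only (so [0:0:1] is not on the line l_2 = 0). Set w(f) = min{w_1·i_0 + w_2·i_1 : the monomial x_0^{i_0}x_1^{i_1}x_2^{i_2} occurs in f}. If the triple (f, l_1, l_2) is (t_1,t_2)-semistable, then t_2 − t_1·(2w_2 − w_1)/(w_1+w_2) − 3·w(f)/(w_1+w_2) + d ≥ 0. -/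
import Mathlib


open MvPolynomial

/-- The Hilbert–Mumford function `μ(f, r)`: the minimum over all monomials
`x_0^{d_0} ⋯ x_{m-1}^{d_{m-1}}` occurring in `f` of `∑ i, d_i * r_i`.
(Junk value `0` if the support is empty.) -/
noncomputable def mu {m : ℕ} (f : MvPolynomial (Fin m) ℂ) (r : Fin m → ℤ) : ℤ :=
  if h : f.support.Nonempty then
    f.support.inf' h (fun D => ∑ i, (D i : ℤ) * r i)
  else 0

/-- A weight vector `r` is normalized if `r ≠ 0`, `r_0 ≥ r_1 ≥ ⋯ ≥ r_{m-1}` and `∑ r_i = 0`. -/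
def Normalized {m : ℕ} (r : Fin m → ℤ) : Prop :=
  r ≠ 0 ∧ (∀ i j : Fin m, i ≤ j → r j ≤ r i) ∧ ∑ i, r i = 0

/-- The action of a matrix on polynomials by linear substitution of the variables. -/
noncomputable def act {m : ℕ} (g : Matrix (Fin m) (Fin m) ℂ)
    (f : MvPolynomial (Fin m) ℂ) : MvPolynomial (Fin m) ℂ :=
  aeval (fun i => ∑ j, C (g i j) * X j) f

/-- `(f, l)` is `t`-semistable if `μ(g·f, r) + ∑ i, t i · μ(g·l_i, r) ≤ 0` for every
`g ∈ SL(m, ℂ)` and every normalized weight vector `r`. -/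
def SemiStable {m : ℕ} {ι : Type} [Fintype ι] (t : ι → ℚ)
    (f : MvPolynomial (Fin m) ℂ) (l : ι → MvPolynomial (Fin m) ℂ) : Prop :=
  ∀ g : Matrix.SpecialLinearGroup (Fin m) ℂ, ∀ r : Fin m → ℤ, Normalized r →
    (mu (act (g : Matrix (Fin m) (Fin m) ℂ) f) r : ℚ)
      + ∑ i, t i * (mu (act (g : Matrix (Fin m) (Fin m) ℂ) (l i)) r : ℚ) ≤ 0

/-- `(f, l)` is `t`-stable if the strict inequality holds for all `g` and normalized `r`. -/
def Stable {m : ℕ} {ι : Type} [Fintype ι] (t : ι → ℚ)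
    (f : MvPolynomial (Fin m) ℂ) (l : ι → MvPolynomial (Fin m) ℂ) : Prop :=
  ∀ g : Matrix.SpecialLinearGroup (Fin m) ℂ, ∀ r : Fin m → ℤ, Normalized r →
    (mu (act (g : Matrix (Fin m) (Fin m) ℂ) f) r : ℚ)
      + ∑ i, t i * (mu (act (g : Matrix (Fin m) (Fin m) ℂ) (l i)) r : ℚ) < 0

lemma mu_le {m : ℕ} {f : MvPolynomial (Fin m) ℂ} (r : Fin m → ℤ) {D : Fin m →₀ ℕ}
    (hD : D ∈ f.support) : mu f r ≤ ∑ i, (D i : ℤ) * r i := by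
  rw [mu, dif_pos ⟨D, hD⟩]
  exact Finset.inf'_le _ hD

lemma le_mu {m : ℕ} {f : MvPolynomial (Fin m) ℂ} (hf : f ≠ 0) (r : Fin m → ℤ) {L : ℤ}
    (h : ∀ D ∈ f.support, L ≤ ∑ i, (D i : ℤ) * r i) : L ≤ mu f r := by
  rw [mu, dif_pos (support_nonempty.mpr hf)]
  exact Finset.le_inf' _ _ h

lemma single_weight (j : Fin 3) (r : Fin 3 → ℤ) :
    ∑ i, ((Finsupp.single j (1:ℕ)) i : ℤ) * r i = r j := by
  fin_cases j <;> simp [Fin.sum_univ_three, Finsupp.single_apply]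

lemma act_one {m : ℕ} (f : MvPolynomial (Fin m) ℂ) :
    act (1 : Matrix (Fin m) (Fin m) ℂ) f = f := by
  have h : (fun i => ∑ j, C ((1 : Matrix (Fin m) (Fin m) ℂ) i j) * X j)
      = (X : Fin m → MvPolynomial (Fin m) ℂ) := by
    funext i
    simp [Matrix.one_apply, apply_ite (C : ℂ → MvPolynomial (Fin m) ℂ), ite_mul]
  rw [act, h]
  simp [aeval_X_left]

/-- Case (2) of Lemma 2.9 of the paper: if the triple `(f, l_1, l_2)`, with
`l_1 = a·x_0 + b·x_1` a nonzero line through `[0:0:1]` and `l_2 = c·x_0 + e·x_1 + x_2`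
a line not through `[0:0:1]`, is `(t_1, t_2)`-semistable, then
`t_2 − t_1·(2w_2 − w_1)/(w_1+w_2) − 3·w(f)/(w_1+w_2) + d ≥ 0`, where
`w(f) = μ(f, (w_1, w_2, 0))`. -/
theorem semistable_singularity_on_first_line (d : ℕ) (hd : 1 ≤ d)
    (w₁ w₂ : ℤ) (hw : w₂ ≤ w₁) (hw₂ : 1 ≤ w₂)
    (t₁ t₂ : ℚ) (ht₁ : 0 ≤ t₁) (ht₂ : 0 ≤ t₂)
    (f : MvPolynomial (Fin 3) ℂ) (hf : f ≠ 0) (hfh : f.IsHomogeneous d)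
    (a b c e : ℂ) (hab : a ≠ 0 ∨ b ≠ 0)
    (hss : SemiStable ![t₁, t₂] f
      ![C a * X 0 + C b * X 1, C c * X 0 + C e * X 1 + X 2]) :
    0 ≤ t₂ - t₁ * ((2 * (w₂ : ℚ) - (w₁ : ℚ)) / ((w₁ : ℚ) + (w₂ : ℚ)))
        - 3 * (mu f ![w₁, w₂, 0] : ℚ) / ((w₁ : ℚ) + (w₂ : ℚ)) + (d : ℚ) := by
  set l₁ : MvPolynomial (Fin 3) ℂ := C a * X 0 + C b * X 1 with hl₁
  set l₂ : MvPolynomial (Fin 3) ℂ := C c * X 0 + C e * X 1 + X 2 with hl₂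
  set r : Fin 3 → ℤ := ![2*w₁-w₂, 2*w₂-w₁, -w₁-w₂] with hrdef
  have hr0 : r 0 = 2*w₁-w₂ := rfl
  have hr1 : r 1 = 2*w₂-w₁ := rfl
  have hr2 : r 2 = -w₁-w₂ := rfl
  have hnorm : Normalized r := by
    refine ⟨?_, ?_, ?_⟩
    · intro h0
      have := congrFun h0 2
      rw [hr2] at this
      simp at this
      omega
    · intro i j hij
      fin_cases i <;> fin_cases j <;>
        simp_all [hr0, hr1, hr2] <;> omega
    · rw [Fin.sum_univ_three, hr0, hr1, hr2]; ring
  -- expand l₁, l₂ as sums of monomials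
  have hl₁m : l₁ = monomial (Finsupp.single 0 1) a + monomial (Finsupp.single 1 1) b := by
    rw [hl₁, C_mul_X_eq_monomial, C_mul_X_eq_monomial]
  have hl₂m : l₂ = monomial (Finsupp.single 0 1) c + monomial (Finsupp.single 1 1) e
      + monomial (Finsupp.single 2 1) (1:ℂ) := by
    rw [hl₂, C_mul_X_eq_monomial, C_mul_X_eq_monomial, X]
  -- l₁ ≠ 0
  have hsne : (Finsupp.single (0 : Fin 3) 1) ≠ (Finsupp.single (1 : Fin 3) 1) := by
    intro h
    have := DFunLike.congr_fun h 0
    simp [Finsupp.single_apply] at this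
  have hl₁ne : l₁ ≠ 0 := by
    intro h0
    rcases hab with ha | hb
    · have : coeff (Finsupp.single 0 1) l₁ = a := by
        rw [hl₁m]; simp [coeff_monomial, hsne.symm]
      rw [h0] at this; simp at this; exact ha this.symm
    · have : coeff (Finsupp.single 1 1) l₁ = b := by
        rw [hl₁m]; simp [coeff_monomial, hsne]
      rw [h0] at this; simp at this; exact hb this.symm
  -- l₂ ≠ 0
  have hc2 : coeff (Finsupp.single 2 1) l₂ = 1 := by
    rw [hl₂m]
    have h02 : (Finsupp.single (0:Fin 3) 1) ≠ (Finsupp.single (2:Fin 3) 1) := by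
      intro h; have := DFunLike.congr_fun h 0; simp [Finsupp.single_apply] at this
    have h12 : (Finsupp.single (1:Fin 3) 1) ≠ (Finsupp.single (2:Fin 3) 1) := by
      intro h; have := DFunLike.congr_fun h 1; simp [Finsupp.single_apply] at this
    simp [coeff_monomial, h02, h12]
  have hl₂ne : l₂ ≠ 0 := fun h0 => by rw [h0] at hc2; simp at hc2
  -- support bounds
  have hsupp₁ : l₁.support ⊆ {Finsupp.single 0 1, Finsupp.single 1 1} := by
    rw [hl₁m]
    refine (support_add).trans ?_
    intro D hD
    simp only [Finset.mem_union] at hD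
    rcases hD with h | h
    · have := support_monomial_subset h
      simp at this; simp [this]
    · have := support_monomial_subset h
      simp at this; simp [this]
  have hsupp₂ : l₂.support ⊆
      {Finsupp.single 0 1, Finsupp.single 1 1, Finsupp.single 2 1} := by
    rw [hl₂m]
    refine (support_add).trans ?_
    intro D hD
    simp only [Finset.mem_union] at hD
    rcases hD with h | h
    · rcases Finset.mem_union.mp (support_add h) with h' | h'
      · have := support_monomial_subset h'; simp at this; simp [this]
      · have := support_monomial_subset h'; simp at this; simp [this]
    · have := support_monomial_subset h; simp at this; simp [this]
  -- bound on mu f r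
  have hμf : 3 * mu f ![w₁, w₂, 0] - (w₁+w₂) * d ≤ mu f r := by
    apply le_mu hf
    intro D hD
    have hw1 : mu f ![w₁, w₂, 0] ≤ ∑ i, (D i : ℤ) * (![w₁, w₂, 0] : Fin 3 → ℤ) i :=
      mu_le _ hD
    have hdeg : (D 0 : ℤ) + D 1 + D 2 = d := by
      have h := hfh (mem_support_iff.mp hD)
      rw [Finsupp.weight_apply, Finsupp.sum_fintype] at h
      · simp only [Fin.sum_univ_three, Pi.one_apply, smul_eq_mul, mul_one] at h
        push_cast [← h]; ring
      · intro i; simp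
    rw [Fin.sum_univ_three] at hw1 ⊢
    have e1 : (![w₁, w₂, 0] : Fin 3 → ℤ) 0 = w₁ := rfl
    have e2 : (![w₁, w₂, 0] : Fin 3 → ℤ) 1 = w₂ := rfl
    have e3 : (![w₁, w₂, 0] : Fin 3 → ℤ) 2 = 0 := rfl
    rw [e1, e2, e3] at hw1
    rw [hr0, hr1, hr2]
    nlinarith [hw1, hdeg]
  -- bound on mu l₁ r
  have hμ1 : 2*w₂ - w₁ ≤ mu l₁ r := by
    apply le_mu hl₁ne
    intro D hD
    have := hsupp₁ hD
    simp only [Finset.mem_insert, Finset.mem_singleton] at this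
    rcases this with h | h <;> subst h <;> rw [single_weight]
    · rw [hr0]; omega
    · rw [hr1]
  -- bound on mu l₂ r
  have hμ2 : -w₁ - w₂ ≤ mu l₂ r := by
    apply le_mu hl₂ne
    intro D hD
    have := hsupp₂ hD
    simp only [Finset.mem_insert, Finset.mem_singleton] at this
    rcases this with h | h | h <;> subst h <;> rw [single_weight]
    · rw [hr0]; omega
    · rw [hr1]; omega
    · rw [hr2]
  -- semistability at g = 1
  have key := hss 1 r hnorm
  simp only [Matrix.SpecialLinearGroup.coe_one, act_one, Fin.sum_univ_two,
    Matrix.cons_val_zero, Matrix.cons_val_one, Matrix.head_cons] at key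
  -- assemble
  have hK : (0:ℚ) < (w₁:ℚ) + w₂ := by
    have : (1:ℤ) ≤ w₁ := le_trans hw₂ hw
    push_cast
    have h1 : (1:ℚ) ≤ (w₁:ℚ) := by exact_mod_cast this
    have h2 : (1:ℚ) ≤ (w₂:ℚ) := by exact_mod_cast hw₂
    linarith
  set W : ℚ := (mu f ![w₁, w₂, 0] : ℚ) with hW
  have hA : 3 * W - ((w₁:ℚ)+w₂) * d ≤ (mu f r : ℚ) := by
    rw [hW]
    exact_mod_cast hμf
  have hB : t₁ * (2*(w₂:ℚ) - w₁) ≤ t₁ * (mu l₁ r : ℚ) := by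
    apply mul_le_mul_of_nonneg_left _ ht₁
    exact_mod_cast hμ1
  have hC : t₂ * (-(w₁:ℚ) - w₂) ≤ t₂ * (mu l₂ r : ℚ) := by
    apply mul_le_mul_of_nonneg_left _ ht₂
    exact_mod_cast hμ2
  have hnum : 0 ≤ t₂ * ((w₁:ℚ)+w₂) - t₁ * (2*(w₂:ℚ) - w₁) - 3*W + d * ((w₁:ℚ)+w₂) := by
    nlinarith [key, hA, hB, hC]
  have hgoal : t₂ - t₁ * ((2 * (w₂ : ℚ) - (w₁ : ℚ)) / ((w₁ : ℚ) + (w₂ : ℚ)))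
        - 3 * W / ((w₁ : ℚ) + (w₂ : ℚ)) + (d : ℚ)
      = (t₂ * ((w₁:ℚ)+w₂) - t₁ * (2*(w₂:ℚ) - w₁) - 3*W + d * ((w₁:ℚ)+w₂))
          / ((w₁:ℚ)+w₂) := by
    field_simp
  rw [hgoal]
  exact div_nonneg hnum hK.le
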